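/- arXiv:2509.12010 — 2 statements merged into one kernel-verified Lean document; each statement's English description precedes it below -/
import Mathlib

section
/- Let M = (S, A, s0, p, γ) be a finite discounted MDP without reward and π a deterministic policy. Let T_{p,π} : ℝ^S × ℝ^{S×(A−1)} → ℝ^{S×A} be the linear map sending (V, A) to the reward r with r(s,a) = V(s) − γ ∑_{s'} p(s'|s,a) V(s') for a = π(s), and r(s,a) = V(s) − γ ∑_{s'} p(s'|s,a) V(s') + A(s,a) for a ≠ π(s), where A ∈ ℝ^{S×(A−1)} has one entry A(s,a) per pair (s,a) with a ≠ π(s). Let W_{p,π} ∈ ℝ^{S×S} be the matrix with W_{p,π}(s,s') = 1{s'=s} − γ p(s'|s,π(s)). Then |det(T_{p,π})| = |det(W_{p,π})|, where det(T_{p,π}) is the determinant of T_{p,π} viewed as a linear endomorphism of ℝ^{S·A} (identifying ℝ^S × ℝ^{S×(A−1)} with ℝ^{S·A}). -/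
open scoped ENNReal

open scoped BigOperators
open MeasureTheory

/-- A finite discounted MDP without reward. -/
structure MDP (S A : Type) [Fintype S] [Fintype A] where
  s0 : S
  p : S → A → S → ℝ
  p_nonneg : ∀ s a s', 0 ≤ p s a s'
  p_sum_one : ∀ s a, ∑ s', p s a s' = 1
  disc : ℝ
  disc_nonneg : 0 ≤ disc
  disc_lt_one : disc < 1

section Defs

variable {S A : Type} [Fintype S] [Fintype A] [DecidableEq S] [DecidableEq A]

/-- `π` is a (stochastic) policy: each `π s` is a probability distribution on actions. -/
def IsPolicy (π : S → A → ℝ) : Prop :=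
  (∀ s a, 0 ≤ π s a) ∧ ∀ s, ∑ a, π s a = 1

open Classical in
/-- The stochastic policy induced by a deterministic policy `d`. -/
noncomputable def detPolicy (d : S → A) : S → A → ℝ :=
  fun s a => if a = d s then 1 else 0

/-- The state-transition matrix of a policy. -/
noncomputable def Pmat (M : MDP S A) (π : S → A → ℝ) : Matrix S S ℝ :=
  Matrix.of fun s s' => ∑ a, π s a * M.p s a s'

/-- The value function `V^π(s; p, r)`. -/
noncomputable def Vpi (M : MDP S A) (π : S → A → ℝ) (r : S × A → ℝ) (s : S) : ℝ :=
  ∑' t : ℕ, M.disc ^ t * ((Pmat M π ^ t).mulVec (fun s' => ∑ a, π s' a * r (s', a))) s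

/-- The optimal value function `V*(s; p, r)`. -/
noncomputable def Vstar (M : MDP S A) (r : S × A → ℝ) (s : S) : ℝ :=
  ⨆ π : {π : S → A → ℝ // IsPolicy π}, Vpi M π.1 r s

noncomputable def Qpi (M : MDP S A) (π : S → A → ℝ) (r : S × A → ℝ) (s : S) (a : A) : ℝ :=
  r (s, a) + M.disc * ∑ s', M.p s a s' * Vpi M π r s'

noncomputable def Api (M : MDP S A) (π : S → A → ℝ) (r : S × A → ℝ) (s : S) (a : A) : ℝ :=
  Qpi M π r s a - Vpi M π r s

noncomputable def Qstar (M : MDP S A) (r : S × A → ℝ) (s : S) (a : A) : ℝ :=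
  r (s, a) + M.disc * ∑ s', M.p s a s' * Vstar M r s'

noncomputable def Astar (M : MDP S A) (r : S × A → ℝ) (s : S) (a : A) : ℝ :=
  Qstar M r s a - Vstar M r s

/-- The soft (entropy-regularized) value function `V^π_λ(s; p, r)`. -/
noncomputable def VpiSoft (M : MDP S A) (lam : ℝ) (π : S → A → ℝ) (r : S × A → ℝ) (s : S) : ℝ :=
  ∑' t : ℕ, M.disc ^ t *
    ((Pmat M π ^ t).mulVec
      (fun s' => ∑ a, π s' a * (r (s', a) - lam * Real.log (π s' a)))) s

noncomputable def VstarSoft (M : MDP S A) (lam : ℝ) (r : S × A → ℝ) (s : S) : ℝ :=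
  ⨆ π : {π : S → A → ℝ // IsPolicy π}, VpiSoft M lam π.1 r s

noncomputable def QstarSoft (M : MDP S A) (lam : ℝ) (r : S × A → ℝ) (s : S) (a : A) : ℝ :=
  r (s, a) + M.disc * ∑ s', M.p s a s' * VstarSoft M lam r s'

noncomputable def AstarSoft (M : MDP S A) (lam : ℝ) (r : S × A → ℝ) (s : S) (a : A) : ℝ :=
  QstarSoft M lam r s a - VstarSoft M lam r s

/-- The OPT feasible set `R^{OPT,S̄}_{M,d}` of a deterministic policy `d`. -/
def ROPT (M : MDP S A) (Sbar : Set S) (d : S → A) : Set (S × A → ℝ) :=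
  {r | ∀ s ∈ Sbar, ∀ a, Qstar M r s a ≤ Qstar M r s (d s)}

/-- The MCE feasible set `R^{MCE,S}_{M,π}` (with `S̄ = S`). -/
def RMCE (M : MDP S A) (lam : ℝ) (π : S → A → ℝ) : Set (S × A → ℝ) :=
  {r | ∀ s a, π s a =
      Real.exp (QstarSoft M lam r s a / lam) / ∑ a', Real.exp (QstarSoft M lam r s a' / lam)}

/-- The BIRL feasible set `R^{BIRL,S}_{M,π}` (with `S̄ = S`). -/
def RBIRL (M : MDP S A) (bet : ℝ) (π : S → A → ℝ) : Set (S × A → ℝ) :=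
  {r | ∀ s a, π s a =
      Real.exp (Qstar M r s a / bet) / ∑ a', Real.exp (Qstar M r s a' / bet)}

open Classical in
/-- The matrix `W_{p,π}`. -/
noncomputable def Wmat (M : MDP S A) (π : S → A → ℝ) : Matrix S S ℝ :=
  Matrix.of fun s s' => (if s' = s then (1 : ℝ) else 0) - M.disc * ∑ a, π s a * M.p s a s'

/-- `k_π := |det W_{p,π}|^{-1/|S|}`. -/
noncomputable def kpi (M : MDP S A) (π : S → A → ℝ) : ℝ :=
  |(Wmat M π).det| ^ (-(1 : ℝ) / (Fintype.card S : ℝ))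

/-- `𝒮R^{OPT}_M`. -/
def SROPT (M : MDP S A) (C1 C2 : ℝ) : Set (S × A → ℝ) :=
  {r | ∀ π : S → A → ℝ, IsPolicy π → (∀ s, Vpi M π r s = Vstar M r s) →
      ∀ s a, |Vpi M π r s| ≤ C1 * kpi M π ∧ |Api M π r s a| ≤ C2}

/-- `𝒮R^{MCE}_M`. -/
def SRMCE (M : MDP S A) (lam C1 C2 : ℝ) : Set (S × A → ℝ) :=
  {r | ∀ s a, |VstarSoft M lam r s| ≤ C1 ∧ |AstarSoft M lam r s a| ≤ C2}

/-- `𝒮R^{BIRL}_M`. -/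
def SRBIRL (M : MDP S A) (C1 C2 : ℝ) : Set (S × A → ℝ) :=
  {r | ∀ s a, |Vstar M r s| ≤ C1 ∧ |Astar M r s a| ≤ C2}

/-- Discounted state occupancy `∑_{t≥0} γ^t P_{M,π}(s_t = s)`. -/
noncomputable def occ (M : MDP S A) (π : S → A → ℝ) (s : S) : ℝ :=
  ∑' t : ℕ, M.disc ^ t * (Pmat M π ^ t) M.s0 s

/-- The support `S_{M,π}` of a policy: states reachable with positive probability. -/
def supp (M : MDP S A) (π : S → A → ℝ) : Set S := {s | 0 < occ M π s}

end Defs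

/-- The unit hypercube `[-1,1]^{S×A}`. -/
def cube (S A : Type) [Fintype S] [Fintype A] : Set (S × A → ℝ) :=
  {r | ∀ sa, |r sa| ≤ 1}


open Classical in
/-- The linear operator `T_{p,π}` of Eq. (14), written as an endomorphism of `ℝ^{S×A}` under
the natural identification of `ℝ^S × ℝ^{S×(A-1)}` with `ℝ^{S·A}` (the `V`-coordinate of a
state `s` is stored at index `(s, π(s))`, the `A`-coordinate at `(s,a)`, `a ≠ π(s)`). -/
noncomputable def Tmat {S A : Type} [Fintype S] [Fintype A] (M : MDP S A) (d : S → A) :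
    Matrix (S × A) (S × A) ℝ :=
  Matrix.of fun sa sa' =>
    (if sa'.2 = d sa'.1 then
        (if sa'.1 = sa.1 then (1 : ℝ) else 0) - M.disc * M.p sa.1 sa.2 sa'.1
      else 0)
    + (if sa.2 ≠ d sa.1 ∧ sa' = sa then 1 else 0)

/-! The columns of `T_{p,π}` indexed by off-policy pairs `(s, a)`, `a ≠ π s`, are standard basis
vectors, so the determinant of `T_{p,π}` equals that of its minor on the graph `{(s, π s)}` of the
policy, and this minor is `W_{p,π}`. -/

namespace Matrix

variable {ι κ R : Type*} [Fintype ι] [DecidableEq ι] [Fintype κ] [DecidableEq κ] [CommRing R]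

theorem det_eq_det_submatrix_of_col_eq_one (N : Matrix ι ι R) {f : κ → ι}
    (hf : Function.Injective f) (h : ∀ i, ∀ j ∉ Set.range f, N i j = (1 : Matrix ι ι R) i j) :
    N.det = (N.submatrix f f).det := by
  classical
  let e := Equiv.sumCompl (· ∈ Set.range f)
  set B := N.submatrix e e
  have h₁₂ : B.toBlocks₁₂ = 0 := by
    ext ⟨i, hi⟩ ⟨j, hj⟩
    simp only [B, e, toBlocks₁₂, of_apply, submatrix_apply, Equiv.sumCompl_apply_inl,
      Equiv.sumCompl_apply_inr, h i j hj, one_apply, zero_apply]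
    exact if_neg (by rintro rfl; exact hj hi)
  have h₂₂ : B.toBlocks₂₂ = 1 := by
    ext ⟨i, hi⟩ ⟨j, hj⟩
    simp [B, e, toBlocks₂₂, h i j hj, one_apply]
  have hB : B = fromBlocks B.toBlocks₁₁ 0 B.toBlocks₂₁ 1 := by
    rw [← h₁₂, ← h₂₂, fromBlocks_toBlocks]
  calc N.det = B.det := (det_submatrix_equiv_self e N).symm
    _ = B.toBlocks₁₁.det :=
      (congrArg det hB).trans (by rw [det_fromBlocks_zero₁₂, det_one, mul_one])
    _ = (B.toBlocks₁₁.submatrix (Equiv.ofInjective f hf) (Equiv.ofInjective f hf)).det :=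
      (det_submatrix_equiv_self _ _).symm
    _ = (N.submatrix f f).det := rfl

end Matrix

section Tmat

variable {S A : Type} [Fintype S] [Fintype A] [DecidableEq S] [DecidableEq A]

theorem Tmat_apply_of_ne (M : MDP S A) (d : S → A) (i : S × A) {j : S × A} (hj : j.2 ≠ d j.1) :
    Tmat M d i j = (1 : Matrix (S × A) (S × A) ℝ) i j := by
  by_cases hij : i = j
  · subst hij
    simp [Tmat, hj]
  · simp [Tmat, hj, Matrix.one_apply_ne hij, Ne.symm hij]

theorem Tmat_submatrix_graph (M : MDP S A) (d : S → A) :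
    (Tmat M d).submatrix (fun s => (s, d s)) (fun s => (s, d s)) = Wmat M (detPolicy d) := by
  ext s s'
  simp [Tmat, Wmat, detPolicy, ite_mul, Finset.sum_ite_eq']

theorem det_Tmat (M : MDP S A) (d : S → A) :
    (Tmat M d).det = (Wmat M (detPolicy d)).det := by
  rw [(Tmat M d).det_eq_det_submatrix_of_col_eq_one
      (f := fun s => (s, d s)) (fun _ _ h => congrArg Prod.fst h),
    Tmat_submatrix_graph]
  rintro i j hj
  exact Tmat_apply_of_ne M d i fun h => hj ⟨j.1, Prod.ext rfl h.symm⟩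

end Tmat

/-- `|det T_{p,π}| = |det W_{p,π}|` for a deterministic policy `π`. -/
theorem statement16 {S A : Type} [Fintype S] [Fintype A] [DecidableEq S] [DecidableEq A]
    (M : MDP S A) (d : S → A) :
    |(Tmat M d).det| = |(Wmat M (detPolicy d)).det| := by
  rw [det_Tmat]
end

section
/- Let M = (S, A, s0, p, γ) be a finite discounted MDP without reward, β > 0, and π a stochastic policy with π(a|s) > 0 for all (s,a). A reward r ∈ ℝ^{S×A} belongs to R^{BIRL,S}_{M,π} if and only if there exists V ∈ ℝ^S such that for all (s,a), r(s,a) = V(s) − γ ∑_{s'} p(s'|s,a) V(s') + β·log(π(a|s)/max_{a'∈A} π(a'|s)). Moreover, for such r, V(s) = V*(s;p,r) for all s, and β·log(π(a|s)/max_{a'} π(a'|s)) = A*(s,a;p,r) for all (s,a). -/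
open scoped ENNReal

open scoped BigOperators
open MeasureTheory

/-! The Bellman optimality operator `T` is a `γ`-contraction, and every fixed point `V` of it
equals `V*`: by the maximum principle for `γ P` with `P` stochastic, `V` dominates the value of
every policy, and the value of a greedy deterministic policy is `V` itself. Hence `V* = max_a Q*`.

A positive distribution `π` is the softmax of `x / β` exactly when
`β log (π a / max π) = x a - max x`. Applied to `x = Q*` this turns `r ∈ R^{BIRL}` into the
formula for `r` with `V = V*` and identifies the log-ratio with `A*`. Conversely, for `r` of the
given form the one-step lookahead of `V` is `V s + β log (π a / max π)`, whose maximum over `a`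
is `V s`; so `V` is a fixed point of `T`, hence `V = V*`, and `π` is the softmax of `Q* / β`. -/

open Matrix Function

section Stochastic

variable {n : Type*} [Fintype n] [DecidableEq n] {Q : Matrix n n ℝ}

lemma mulVec_le_of_mem_rowStochastic (hQ : Q ∈ rowStochastic ℝ n) {v : n → ℝ} {c : ℝ}
    (hv : ∀ j, v j ≤ c) (i : n) : (Q *ᵥ v) i ≤ c :=
  calc (Q *ᵥ v) i = ∑ j, Q i j * v j := rfl
    _ ≤ ∑ j, Q i j * c := by
      gcongr with j
      exacts [nonneg_of_mem_rowStochastic hQ, hv j]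
    _ = c := by rw [← Finset.sum_mul, sum_row_of_mem_rowStochastic hQ, one_mul]

lemma abs_mulVec_le_of_mem_rowStochastic (hQ : Q ∈ rowStochastic ℝ n) (v : n → ℝ) (i : n) :
    |(Q *ᵥ v) i| ≤ ‖v‖ := by
  have hle : ∀ w : n → ℝ, (Q *ᵥ w) i ≤ ‖w‖ := fun w =>
    mulVec_le_of_mem_rowStochastic hQ (fun j => (le_abs_self _).trans (norm_le_pi_norm w j)) i
  refine abs_le.2 ⟨?_, hle v⟩
  simpa [mulVec_neg, neg_le] using hle (-v)

lemma nonpos_of_le_smul_mulVec (hQ : Q ∈ rowStochastic ℝ n) {γ : ℝ} (hγ₀ : 0 ≤ γ)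
    (hγ₁ : γ < 1) {x : n → ℝ} (hx : x ≤ γ • Q *ᵥ x) : x ≤ 0 := by
  intro i
  obtain ⟨j, -, hj⟩ := Finset.exists_max_image Finset.univ x ⟨i, Finset.mem_univ i⟩
  have hmax : x j ≤ γ * x j :=
    (hx j).trans (mul_le_mul_of_nonneg_left
      (mulVec_le_of_mem_rowStochastic hQ (fun k => hj k (Finset.mem_univ k)) j) hγ₀)
  have hj₀ : x j ≤ 0 := by nlinarith
  exact (hj i (Finset.mem_univ i)).trans hj₀

lemma eq_zero_of_eq_smul_mulVec (hQ : Q ∈ rowStochastic ℝ n) {γ : ℝ} (hγ₀ : 0 ≤ γ)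
    (hγ₁ : γ < 1) {x : n → ℝ} (hx : x = γ • Q *ᵥ x) : x = 0 := by
  refine le_antisymm (nonpos_of_le_smul_mulVec hQ hγ₀ hγ₁ hx.le) ?_
  have : -x ≤ γ • Q *ᵥ -x := by rw [mulVec_neg, smul_neg, ← hx]
  simpa using nonpos_of_le_smul_mulVec hQ hγ₀ hγ₁ this

lemma summable_pow_mul_pow_mulVec (hQ : Q ∈ rowStochastic ℝ n) {γ : ℝ} (hγ₀ : 0 ≤ γ)
    (hγ₁ : γ < 1) (w : n → ℝ) (i : n) :
    Summable fun t : ℕ => γ ^ t * (Q ^ t *ᵥ w) i := by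
  refine .of_norm_bounded ((summable_geometric_of_lt_one hγ₀ hγ₁).mul_right ‖w‖) fun t => ?_
  rw [Real.norm_eq_abs, abs_mul, abs_of_nonneg (pow_nonneg hγ₀ t)]
  exact mul_le_mul_of_nonneg_left
    (abs_mulVec_le_of_mem_rowStochastic (pow_mem hQ t) w i) (pow_nonneg hγ₀ t)

lemma tsum_pow_mul_pow_mulVec_eq (hQ : Q ∈ rowStochastic ℝ n) {γ : ℝ} (hγ₀ : 0 ≤ γ)
    (hγ₁ : γ < 1) (w : n → ℝ) :
    (fun i => ∑' t : ℕ, γ ^ t * (Q ^ t *ᵥ w) i) =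
      w + γ • Q *ᵥ fun i => ∑' t : ℕ, γ ^ t * (Q ^ t *ᵥ w) i := by
  have hs := summable_pow_mul_pow_mulVec hQ hγ₀ hγ₁ w
  funext i
  rw [(hs i).tsum_eq_zero_add]
  simp only [pow_zero, one_mul, one_mulVec, Pi.add_apply, Pi.smul_apply, smul_eq_mul]
  congr 1
  have hterm : ∀ t : ℕ, γ ^ (t + 1) * (Q ^ (t + 1) *ᵥ w) i =
      γ * ∑ j, Q i j * (γ ^ t * (Q ^ t *ᵥ w) j) := fun t => by
    rw [pow_succ' γ, pow_succ' Q, ← mulVec_mulVec, mul_assoc]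
    show γ * (γ ^ t * ∑ j, Q i j * (Q ^ t *ᵥ w) j) = _
    simp only [Finset.mul_sum, mul_left_comm]
  rw [tsum_congr hterm, tsum_mul_left,
    Summable.tsum_finsetSum fun j _ => (hs j).mul_left _]
  simp only [tsum_mul_left]
  rfl

end Stochastic

lemma sum_mul_le_ciSup_of_sum_eq_one {ι : Type*} [Fintype ι] {w : ι → ℝ} (hw₀ : ∀ i, 0 ≤ w i)
    (hw₁ : ∑ i, w i = 1) (f : ι → ℝ) : ∑ i, w i * f i ≤ ⨆ i, f i :=
  calc ∑ i, w i * f i ≤ ∑ i, w i * ⨆ j, f j := by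
        gcongr with i
        exacts [hw₀ i, le_ciSup (Finite.bddAbove_range f) i]
    _ = ⨆ i, f i := by rw [← Finset.sum_mul, hw₁, one_mul]

section Softmax

open Real

variable {ι : Type*} [Fintype ι] {β : ℝ} {p x : ι → ℝ}

lemma mul_log_div_ciSup_eq_sub_ciSup [Nonempty ι] (hβ : 0 < β)
    (hp : ∀ i, p i = exp (x i / β) / ∑ j, exp (x j / β)) (i : ι) :
    β * log (p i / ⨆ j, p j) = x i - ⨆ j, x j := by
  obtain ⟨i₀, hi₀⟩ := exists_eq_ciSup_of_finite (f := x)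
  have hZ : 0 < ∑ j, exp (x j / β) := Finset.sum_pos (fun j _ => exp_pos _) Finset.univ_nonempty
  have hsup : ⨆ j, p j = p i₀ := by
    refine ciSup_eq_of_forall_le_of_forall_lt_exists_gt (fun j => ?_) fun w hw => ⟨i₀, hw⟩
    rw [hp j, hp i₀]
    gcongr
    exact hi₀ ▸ le_ciSup (Finite.bddAbove_range x) j
  rw [hsup, hp i, hp i₀, div_div_div_cancel_right₀ hZ.ne', ← exp_sub, ← sub_div, log_exp, hi₀]
  field_simp

lemma eq_softmax_of_eq_add_mul_log (hβ : β ≠ 0) (hp : ∀ i, 0 < p i) (hp₁ : ∑ i, p i = 1)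
    {c K : ℝ} (hc : 0 < c) (hx : ∀ i, x i = K + β * log (p i / c)) (i : ι) :
    p i = exp (x i / β) / ∑ j, exp (x j / β) := by
  have hexp (j : ι) : exp (x j / β) = exp (K / β) * (p j / c) := by
    rw [hx j, add_div, exp_add, mul_div_cancel_left₀ _ hβ, exp_log (div_pos (hp j) hc)]
  simp only [hexp, ← Finset.mul_sum, ← Finset.sum_div, hp₁]
  field_simp

lemma ciSup_add_mul_log_div_ciSup [Nonempty ι] (hβ : 0 ≤ β) (hp : ∀ i, 0 < p i) (K : ℝ) :
    ⨆ i, (K + β * log (p i / ⨆ j, p j)) = K := by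
  obtain ⟨i₀, hi₀⟩ := exists_eq_ciSup_of_finite (f := p)
  refine ciSup_eq_of_forall_le_of_forall_lt_exists_gt (fun i => ?_) fun w hw => ⟨i₀, ?_⟩
  · have hlog : log (p i / ⨆ j, p j) ≤ 0 :=
      log_nonpos (div_nonneg (hp i).le (hi₀ ▸ (hp i₀).le))
        ((div_le_one (hi₀ ▸ hp i₀)).2 (le_ciSup (Finite.bddAbove_range p) i))
    exact add_le_of_nonpos_right (mul_nonpos_of_nonneg_of_nonpos hβ hlog)
  · rwa [← hi₀, div_self (hp i₀).ne', log_one, mul_zero, add_zero]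

end Softmax

section Bellman

variable {S A : Type} [Fintype S] [Fintype A] (M : MDP S A) (r : S × A → ℝ)

def expectedReward (π : S → A → ℝ) : S → ℝ := fun s => ∑ a, π s a * r (s, a)

def bellmanQ (v : S → ℝ) (s : S) (a : A) : ℝ := r (s, a) + M.disc * ∑ s', M.p s a s' * v s'

noncomputable def bellmanOpt (v : S → ℝ) : S → ℝ := fun s => ⨆ a, bellmanQ M r v s a

lemma expectedReward_add_disc_mul_mulVec (π : S → A → ℝ) (v : S → ℝ) (s : S) :
    expectedReward r π s + M.disc * (Pmat M π *ᵥ v) s = ∑ a, π s a * bellmanQ M r v s a := by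
  simp only [expectedReward, bellmanQ, Pmat, mulVec, dotProduct, of_apply, mul_add,
    Finset.sum_add_distrib, Finset.mul_sum, Finset.sum_mul]
  rw [Finset.sum_comm]
  congr 1
  exact Finset.sum_congr rfl fun a _ => Finset.sum_congr rfl fun s' _ => by ring

lemma bellmanQ_le_add {v w : S → ℝ} {c : ℝ} (hvw : ∀ s, v s ≤ w s + c) (s : S) (a : A) :
    bellmanQ M r v s a ≤ bellmanQ M r w s a + M.disc * c := by
  have hp : ∑ s', M.p s a s' * v s' ≤ ∑ s', M.p s a s' * w s' + c :=
    calc ∑ s', M.p s a s' * v s' ≤ ∑ s', M.p s a s' * (w s' + c) := by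
          gcongr with s'
          exacts [M.p_nonneg s a s', hvw s']
      _ = ∑ s', M.p s a s' * w s' + c := by
          simp only [mul_add, Finset.sum_add_distrib, ← Finset.sum_mul, M.p_sum_one, one_mul]
  simp only [bellmanQ]
  nlinarith [M.disc_nonneg]

variable [Nonempty A]

lemma bellmanOpt_le_add {v w : S → ℝ} {c : ℝ} (hvw : ∀ s, v s ≤ w s + c) (s : S) :
    bellmanOpt M r v s ≤ bellmanOpt M r w s + M.disc * c :=
  ciSup_le fun a => (bellmanQ_le_add M r hvw s a).trans <|
    add_le_add_left (le_ciSup (Finite.bddAbove_range _) a) _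

lemma bellmanOpt_contracting :
    ContractingWith ⟨M.disc, M.disc_nonneg⟩ (bellmanOpt M r) := by
  refine ⟨by exact_mod_cast M.disc_lt_one, LipschitzWith.of_dist_le_mul fun v w => ?_⟩
  have hvw : ∀ s, |v s - w s| ≤ dist v w := fun s =>
    (Real.dist_eq _ _).symm.trans_le (dist_le_pi_dist v w s)
  refine (dist_pi_le_iff (mul_nonneg M.disc_nonneg dist_nonneg)).2 fun s => ?_
  rw [Real.dist_eq, abs_sub_le_iff]
  have hv := bellmanOpt_le_add M r (v := v) (w := w) (c := dist v w)
    (fun s => by linarith [(abs_sub_le_iff.1 (hvw s)).1]) s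
  have hw := bellmanOpt_le_add M r (v := w) (w := v) (c := dist v w)
    (fun s => by linarith [(abs_sub_le_iff.1 (hvw s)).2]) s
  constructor <;> linarith

end Bellman

lemma isPolicy_detPolicy {S A : Type} [Fintype A] [DecidableEq A] (d : S → A) :
    IsPolicy (detPolicy d) :=
  ⟨fun s a => by unfold detPolicy; split_ifs <;> norm_num, fun s => by simp [detPolicy]⟩

lemma sum_detPolicy_mul {S A : Type} [Fintype A] [DecidableEq A] (d : S → A) (s : S)
    (f : A → ℝ) : ∑ a, detPolicy d s a * f a = f (d s) := by
  simp [detPolicy]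

section ValueFunctions

variable {S A : Type} [Fintype S] [Fintype A] [DecidableEq S] (M : MDP S A) (r : S × A → ℝ)

lemma pmat_mem_rowStochastic {π : S → A → ℝ} (hπ : IsPolicy π) :
    Pmat M π ∈ rowStochastic ℝ S := by
  refine mem_rowStochastic_iff_sum.2 ⟨fun s s' => ?_, fun s => ?_⟩
  · exact Finset.sum_nonneg fun a _ => mul_nonneg (hπ.1 s a) (M.p_nonneg s a s')
  · simp only [Pmat, of_apply]
    rw [Finset.sum_comm]
    simp only [← Finset.mul_sum, M.p_sum_one, mul_one, hπ.2 s]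

variable {π : S → A → ℝ}

lemma vpi_eq_expectedReward_add (hπ : IsPolicy π) :
    Vpi M π r = expectedReward r π + M.disc • Pmat M π *ᵥ Vpi M π r :=
  tsum_pow_mul_pow_mulVec_eq (pmat_mem_rowStochastic M hπ) M.disc_nonneg M.disc_lt_one _

lemma vpi_le_of_expectedReward_add_le (hπ : IsPolicy π) {v : S → ℝ}
    (hv : expectedReward r π + M.disc • Pmat M π *ᵥ v ≤ v) : Vpi M π r ≤ v := by
  refine sub_nonpos.1 (nonpos_of_le_smul_mulVec (pmat_mem_rowStochastic M hπ) M.disc_nonneg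
    M.disc_lt_one ?_)
  calc Vpi M π r - v ≤ Vpi M π r - (expectedReward r π + M.disc • Pmat M π *ᵥ v) :=
        sub_le_sub_left hv _
    _ = M.disc • Pmat M π *ᵥ (Vpi M π r - v) := by
        conv_lhs => rw [vpi_eq_expectedReward_add M r hπ]
        rw [mulVec_sub, smul_sub]
        abel

lemma vpi_eq_of_eq_expectedReward_add (hπ : IsPolicy π) {v : S → ℝ}
    (hv : v = expectedReward r π + M.disc • Pmat M π *ᵥ v) : Vpi M π r = v := by
  refine sub_eq_zero.1 (eq_zero_of_eq_smul_mulVec (pmat_mem_rowStochastic M hπ) M.disc_nonneg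
    M.disc_lt_one ?_)
  conv_lhs => rw [vpi_eq_expectedReward_add M r hπ, hv]
  rw [mulVec_sub, smul_sub]
  abel

variable [Nonempty A]

lemma vstar_eq_of_isFixedPt {v : S → ℝ} (hv : IsFixedPt (bellmanOpt M r) v) :
    Vstar M r = v := by
  classical
  have hle (π : {π : S → A → ℝ // IsPolicy π}) : Vpi M π.1 r ≤ v :=
    vpi_le_of_expectedReward_add_le M r π.2 fun s => by
      rw [Pi.add_apply, Pi.smul_apply, smul_eq_mul, expectedReward_add_disc_mul_mulVec]
      exact (sum_mul_le_ciSup_of_sum_eq_one (π.2.1 s) (π.2.2 s) _).trans_eq (congrFun hv s)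
  choose d hd using fun s => exists_eq_ciSup_of_finite (f := bellmanQ M r v s)
  have hgreedy : Vpi M (detPolicy d) r = v :=
    vpi_eq_of_eq_expectedReward_add M r (isPolicy_detPolicy d) <| funext fun s => by
      rw [Pi.add_apply, Pi.smul_apply, smul_eq_mul, expectedReward_add_disc_mul_mulVec,
        sum_detPolicy_mul, hd]
      exact (congrFun hv s).symm
  have : Nonempty {π : S → A → ℝ // IsPolicy π} := ⟨⟨detPolicy d, isPolicy_detPolicy d⟩⟩
  funext s
  exact ciSup_eq_of_forall_le_of_forall_lt_exists_gt (fun π => hle π s) fun w hw =>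
    ⟨⟨detPolicy d, isPolicy_detPolicy d⟩, hw.trans_eq (congrFun hgreedy s).symm⟩

lemma vstar_eq_iSup_qstar (s : S) : Vstar M r s = ⨆ a, Qstar M r s a := by
  have hfix := (bellmanOpt_contracting M r).fixedPoint_isFixedPt
  show Vstar M r s = bellmanOpt M r (Vstar M r) s
  rw [vstar_eq_of_isFixedPt M r hfix, hfix]

end ValueFunctions

theorem statement17_general {S A : Type} [Fintype S] [Fintype A] [DecidableEq S]
    [Nonempty A]
    (M : MDP S A) (bet : ℝ) (hbet : 0 < bet)
    (π : S → A → ℝ) (hπ : IsPolicy π) (hpos : ∀ s a, 0 < π s a) (r : S × A → ℝ) :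
    (r ∈ RBIRL M bet π ↔
      ∃ V : S → ℝ, ∀ s a, r (s, a) =
        V s - M.disc * ∑ s', M.p s a s' * V s' +
          bet * Real.log (π s a / ⨆ a', π s a')) ∧
    (r ∈ RBIRL M bet π →
      (∀ s a, r (s, a) =
        Vstar M r s - M.disc * (∑ s', M.p s a s' * Vstar M r s') +
          bet * Real.log (π s a / ⨆ a', π s a')) ∧
      ∀ s a, bet * Real.log (π s a / ⨆ a', π s a') = Astar M r s a) := by
  have hadv (h : r ∈ RBIRL M bet π) (s : S) (a : A) :
      bet * Real.log (π s a / ⨆ a', π s a') = Astar M r s a := by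
    rw [mul_log_div_ciSup_eq_sub_ciSup hbet (h s), ← vstar_eq_iSup_qstar]
    rfl
  have hreward (h : r ∈ RBIRL M bet π) (s : S) (a : A) : r (s, a) =
      Vstar M r s - M.disc * (∑ s', M.p s a s' * Vstar M r s') +
        bet * Real.log (π s a / ⨆ a', π s a') := by
    rw [hadv h s a, Astar, Qstar]
    ring
  refine ⟨⟨fun h => ⟨Vstar M r, hreward h⟩, fun ⟨V, hV⟩ => ?_⟩, fun h => ⟨hreward h, hadv h⟩⟩
  have hQ (s : S) (a : A) :
      bellmanQ M r V s a = V s + bet * Real.log (π s a / ⨆ a', π s a') := by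
    rw [bellmanQ, hV]
    ring
  have hVstar : Vstar M r = V := vstar_eq_of_isFixedPt M r <| funext fun s => by
    simp only [bellmanOpt, hQ]
    exact ciSup_add_mul_log_div_ciSup hbet.le (hpos s) (V s)
  intro s a
  refine eq_softmax_of_eq_add_mul_log hbet.ne' (hpos s) (hπ.2 s) (K := V s)
    ((hpos s a).trans_le (le_ciSup (Finite.bddAbove_range _) a)) (fun a => ?_) a
  rw [← hQ, ← hVstar]
  rfl

/-- explicit parametrization of the BIRL feasible set. -/
theorem statement17 {S A : Type} [Fintype S] [Fintype A] [DecidableEq S] [DecidableEq A]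
    [Nonempty A]
    (M : MDP S A) (bet : ℝ) (hbet : 0 < bet)
    (π : S → A → ℝ) (hπ : IsPolicy π) (hpos : ∀ s a, 0 < π s a) (r : S × A → ℝ) :
    (r ∈ RBIRL M bet π ↔
      ∃ V : S → ℝ, ∀ s a, r (s, a) =
        V s - M.disc * ∑ s', M.p s a s' * V s' +
          bet * Real.log (π s a / ⨆ a', π s a')) ∧
    (r ∈ RBIRL M bet π →
      (∀ s a, r (s, a) =
        Vstar M r s - M.disc * (∑ s', M.p s a s' * Vstar M r s') +
          bet * Real.log (π s a / ⨆ a', π s a')) ∧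
      ∀ s a, bet * Real.log (π s a / ⨆ a', π s a') = Astar M r s a) :=
  statement17_general M bet hbet π hπ hpos r
end
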